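/- arXiv:1804.00951 — 5 statements merged into one kernel-verified Lean document; each statement's English description precedes it below -/
import Mathlib

section
/- C decomposes as C = {0} ∪ ⋃_{n ∈ ℕ} T₀^n '' C₁ ∪ ⋃_{n ∈ ℕ} T₀^n '' C₋₁, where T₀^n denotes the n-th iterate of T₀. -/
/-!
Every point of `C` other than those in the copies of `C₁`, `C₋₁` under powers of `T₀` lies in
`T₀ⁿ '' C` for every `n`, i.e. is `100⁻ⁿ` times a point of `C`; boundedness of `C` forces it to
be `0`. Conversely `0 ∈ C` because `C` is closed, `T₀`-invariant and the `T₀`-orbit of any of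
its points converges to `0`.
-/

open Set Filter Topology

noncomputable section

/-- The affine contraction of ratio 1/100 fixing 0. -/
def T0 (x : ℝ) : ℝ := x / 100

/-- The affine contraction of ratio 1/100 fixing 1. -/
def T1 (x : ℝ) : ℝ := 1 + (x - 1) / 100

/-- The affine contraction of ratio 1/100 fixing -1. -/
def Tm1 (x : ℝ) : ℝ := -1 + (x + 1) / 100

theorem iUnion_image_iterate_union {α : Type*} (f : α → α) (A B : Set α) :
    ⋃ n : ℕ, f^[n] '' (A ∪ B) = (⋃ n : ℕ, f^[n] '' A) ∪ ⋃ n : ℕ, f^[n] '' B := by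
  simp only [image_union, iUnion_union_distrib]

theorem mem_image_iterate_of_notMem_iUnion {α : Type*} {f : α → α} {C D : Set α}
    (hcover : C ⊆ D ∪ f '' C) {x : α} (hx : x ∈ C) (hD : x ∉ ⋃ n : ℕ, f^[n] '' D) (n : ℕ) :
    x ∈ f^[n] '' C := by
  induction n with
  | zero => simpa using hx
  | succ n ih =>
    obtain ⟨y, hy, rfl⟩ := ih
    rcases hcover hy with hyD | ⟨z, hz, rfl⟩
    · exact absurd (mem_iUnion.2 ⟨n, mem_image_of_mem _ hyD⟩) hD
    · exact ⟨z, hz, Function.iterate_succ_apply f n z⟩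

theorem T0_iterate_apply (n : ℕ) (x : ℝ) : T0^[n] x = x / 100 ^ n := by
  induction n generalizing x with
  | zero => simp
  | succ n ih =>
    rw [Function.iterate_succ_apply, ih, T0, pow_succ']
    ring

theorem tendsto_T0_iterate (x : ℝ) : Tendsto (fun n : ℕ => T0^[n] x) atTop (𝓝 0) := by
  simp only [T0_iterate_apply]
  exact tendsto_const_nhds.div_atTop (tendsto_pow_atTop_atTop_of_one_lt (by norm_num))

theorem zero_mem_of_mapsTo_T0 {C : Set ℝ} (hne : C.Nonempty) (hC : IsClosed C)
    (hT0 : MapsTo T0 C C) : (0 : ℝ) ∈ C :=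
  let ⟨x, hx⟩ := hne
  hC.mem_of_tendsto (tendsto_T0_iterate x) (Eventually.of_forall fun n => hT0.iterate n hx)

theorem eq_zero_of_forall_mem_image_T0_iterate {C : Set ℝ} (hC : Bornology.IsBounded C) {x : ℝ}
    (hx : ∀ n : ℕ, x ∈ T0^[n] '' C) : x = 0 := by
  obtain ⟨M, hM⟩ := hC.subset_closedBall 0
  have hbound : ∀ n : ℕ, |x| ≤ T0^[n] M := by
    intro n
    obtain ⟨y, hy, rfl⟩ := hx n
    have hyM : |y| ≤ M := by simpa using hM hy
    rw [T0_iterate_apply, T0_iterate_apply, abs_div, abs_pow,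
      abs_of_pos (by norm_num : (0 : ℝ) < 100)]
    gcongr
  exact abs_nonpos_iff.1 (ge_of_tendsto' (tendsto_T0_iterate M) hbound)

theorem stmt_4 (C : Set ℝ) (hne : C.Nonempty) (hcomp : IsCompact C)
    (hself : C = Tm1 '' C ∪ T0 '' C ∪ T1 '' C) :
    C = {0} ∪ (⋃ n : ℕ, T0^[n] '' (T1 '' C)) ∪ (⋃ n : ℕ, T0^[n] '' (Tm1 '' C)) := by
  set D := T1 '' C ∪ Tm1 '' C
  have hcover : C ⊆ D ∪ T0 '' C := fun x hx => by
    rw [hself] at hx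
    rcases hx with (h | h) | h <;> simp [D, h]
  have hD : D ⊆ C :=
    union_subset (fun x h => hself ▸ Or.inr h) (fun x h => hself ▸ Or.inl (Or.inl h))
  have hT0 : MapsTo T0 C C := fun x hx => hself ▸ Or.inl (Or.inr (mem_image_of_mem _ hx))
  rw [union_assoc, ← iUnion_image_iterate_union]
  refine Subset.antisymm (fun x hx => ?_) (union_subset ?_ ?_)
  · by_cases hxD : x ∈ ⋃ n : ℕ, T0^[n] '' D
    · exact Or.inr hxD
    · exact Or.inl (eq_zero_of_forall_mem_image_T0_iterate hcomp.isBounded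
        (mem_image_iterate_of_notMem_iUnion hcover hx hxD))
  · exact singleton_subset_iff.2 (zero_mem_of_mapsTo_T0 hne hcomp.isClosed hT0)
  · exact iUnion_subset fun n => (image_mono hD).trans (hT0.iterate n).image_subset
end
end

section
/- The set K₊ is closed in ℝ. -/
noncomputable section

/-- The inverse of `T0`. -/
def T0inv (x : ℝ) : ℝ := 100 * x

/-- The `i`-th iterate of `T0` for `i ≥ 0`, and the `|i|`-th iterate of
`T0⁻¹ : x ↦ 100 x` for `i < 0`. -/
def T0z : ℤ → ℝ → ℝ
  | Int.ofNat n => T0^[n]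
  | Int.negSucc n => T0inv^[n + 1]

/-- The set `K₊ = {0} ∪ ⋃ i ∈ ℤ, T₀^[i] '' (C₁ ∪ C₋₁)` where `C₁ = T₁ '' C`,
`C₋₁ = T₋₁ '' C`. -/
def Kplus (C : Set ℝ) : Set ℝ := {0} ∪ ⋃ i : ℤ, T0z i '' (T1 '' C ∪ Tm1 '' C)

/-!
Away from `0`, `K₊` is the union of the copies `100⁻ⁱ • D` of the compact set `D = C₁ ∪ C₋₁`,
which misses `0` because `C ⊆ [-1, 1]`. So `D` lies in an annulus `a ≤ ‖y‖ ≤ b` with `a > 0`, and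
near a point `x ≠ 0` only finitely many copies occur: a limit point of `K₊` other than `0` lies in a
finite union of compact copies, hence in `K₊`.
-/

open Set Metric Pointwise

theorem finite_setOf_zpow_mem_Icc {c : ℝ} (hc : 1 < c) {u : ℝ} (hu : 0 < u) (v : ℝ) :
    {i : ℤ | c ^ i ∈ Icc u v}.Finite := by
  obtain ⟨n, hn⟩ := pow_unbounded_of_one_lt u⁻¹ hc
  obtain ⟨N, hN⟩ := pow_unbounded_of_one_lt v hc
  refine (finite_Icc (-(n : ℤ)) N).subset fun i ⟨hui, hiv⟩ => ⟨?_, ?_⟩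
  · have : c ^ (-(n : ℤ)) < c ^ i := by
      rw [zpow_neg, zpow_natCast]
      exact ((inv_lt_comm₀ hu (by positivity)).mp hn).trans_le hui
    exact ((zpow_lt_zpow_iff_right₀ hc).mp this).le
  · have : c ^ i < c ^ (N : ℤ) := by rw [zpow_natCast]; exact hiv.trans_lt hN
    exact ((zpow_lt_zpow_iff_right₀ hc).mp this).le

theorem isClosed_insert_zero_iUnion_smul {ι E : Type*} [NormedAddCommGroup E] [NormedSpace ℝ E]
    {s : ι → ℝ} (hs : ∀ u v : ℝ, 0 < u → {i | |s i| ∈ Icc u v}.Finite)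
    {D : Set E} (hD : IsCompact D) (h0 : (0 : E) ∉ D) :
    IsClosed (insert 0 (⋃ i, s i • D)) := by
  obtain ⟨a, ha, haD⟩ : ∃ a > 0, ∀ y ∈ D, a ≤ ‖y‖ := by
    obtain ⟨a, ha, hball⟩ := Metric.isOpen_iff.mp hD.isClosed.isOpen_compl 0 h0
    exact ⟨a, ha, fun y hy => not_lt.mp fun hya => hball (mem_ball_zero_iff.mpr hya) hy⟩
  obtain ⟨b, hb, hbD⟩ := hD.isBounded.exists_pos_norm_le
  refine isClosed_of_closure_subset fun x hx => ?_
  rcases eq_or_ne x 0 with rfl | hx0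
  · exact mem_insert _ _
  set r := ‖x‖ / 2 with hr
  have hr0 : 0 < r := by positivity
  set I := {i | |s i| ∈ Icc (r / b) (3 * r / a)}
  have hsub : ball x r ∩ insert 0 (⋃ i, s i • D) ⊆ ⋃ i ∈ I, s i • D := by
    rintro z ⟨hzx, rfl | hz⟩
    · rw [mem_ball, dist_comm, dist_zero_right] at hzx
      linarith
    obtain ⟨i, y, hy, rfl⟩ := mem_iUnion.mp hz
    have hnorm : ‖s i • y‖ = |s i| * ‖y‖ := by rw [norm_smul, Real.norm_eq_abs]
    have hlow : r < |s i| * ‖y‖ := by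
      have := norm_sub_norm_le x (s i • y)
      rw [mem_ball, dist_eq_norm, ← norm_neg, neg_sub] at hzx
      linarith
    have hhigh : |s i| * ‖y‖ < 3 * r := by
      have := norm_sub_norm_le (s i • y) x
      rw [mem_ball, dist_eq_norm] at hzx
      linarith
    refine mem_biUnion (x := i) ⟨?_, ?_⟩ (smul_mem_smul_set hy)
    · rw [div_le_iff₀ hb]
      nlinarith [abs_nonneg (s i), hbD y hy]
    · rw [le_div_iff₀ ha]
      nlinarith [abs_nonneg (s i), haD y hy]
  have hI : IsClosed (⋃ i ∈ I, s i • D) :=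
    (hs _ _ (by positivity)).isClosed_biUnion fun i _ => (hD.smul (s i)).isClosed
  have hxI := hI.closure_subset <|
    closure_mono hsub (isOpen_ball.inter_closure ⟨mem_ball_self hr0, hx⟩)
  exact mem_insert_of_mem _ (iUnion₂_subset_iUnion _ _ hxI)

theorem T0z_eq_mul (i : ℤ) : T0z i = ((100 : ℝ) ^ (-i) * ·) := by
  cases i with
  | ofNat n =>
    have hT0 : T0 = ((100 : ℝ)⁻¹ * ·) := funext fun x => div_eq_inv_mul x 100
    simp only [T0z, hT0, mul_left_iterate, inv_pow, Int.ofNat_eq_natCast, zpow_neg, zpow_natCast]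
  | negSucc n =>
    have hT0inv : T0inv = ((100 : ℝ) * ·) := rfl
    simp only [T0z, hT0inv, mul_left_iterate, Int.neg_negSucc]
    norm_cast

theorem abs_le_one_of_subset_images {C : Set ℝ} (hcomp : IsCompact C)
    (hself : C ⊆ Tm1 '' C ∪ T0 '' C ∪ T1 '' C) {x : ℝ} (hx : x ∈ C) : |x| ≤ 1 := by
  obtain ⟨x₀, hx₀, hmax⟩ := hcomp.exists_isMaxOn ⟨x, hx⟩ continuous_abs.continuousOn
  -- each of `Tm1`, `T0`, `T1` satisfies `|T y| ≤ (99 + |y|) / 100`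
  obtain ⟨y, hy, hx₀y⟩ : ∃ y ∈ C, |x₀| ≤ (99 + |y|) / 100 := by
    rcases hself hx₀ with (⟨y, hy, rfl⟩ | ⟨y, hy, rfl⟩) | ⟨y, hy, rfl⟩ <;>
      refine ⟨y, hy, abs_le.mpr ⟨?_, ?_⟩⟩ <;> simp only [Tm1, T0, T1] <;>
      linarith [le_abs_self y, neg_abs_le y]
  linarith [isMaxOn_iff.mp hmax x hx, isMaxOn_iff.mp hmax y hy]

theorem stmt_5_general (C : Set ℝ) (hcomp : IsCompact C)
    (hself : C = Tm1 '' C ∪ T0 '' C ∪ T1 '' C) :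
    IsClosed (Kplus C) := by
  have hC : ∀ x ∈ C, |x| ≤ 1 := fun x hx => abs_le_one_of_subset_images hcomp hself.le hx
  have hD : IsCompact (T1 '' C ∪ Tm1 '' C) :=
    (hcomp.image (by unfold T1; fun_prop)).union (hcomp.image (by unfold Tm1; fun_prop))
  have h0 : (0 : ℝ) ∉ T1 '' C ∪ Tm1 '' C := by
    rintro (⟨y, hy, hy0⟩ | ⟨y, hy, hy0⟩) <;> simp only [T1, Tm1] at hy0 <;>
      linarith [abs_le.mp (hC y hy)]
  have hKplus : Kplus C = insert 0 (⋃ i : ℤ, (100 : ℝ) ^ (-i) • (T1 '' C ∪ Tm1 '' C)) := by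
    simp only [Kplus, singleton_union, T0z_eq_mul]
    rfl
  rw [hKplus]
  refine isClosed_insert_zero_iUnion_smul (fun u v hu => ?_) hD h0
  have hfin := finite_setOf_zpow_mem_Icc (by norm_num : (1 : ℝ) < 100) hu v
  refine (hfin.preimage neg_injective.injOn).subset fun i hi => ?_
  rwa [mem_ofPred_eq, abs_of_pos (by positivity)] at hi

theorem stmt_5 (C : Set ℝ) (hne : C.Nonempty) (hcomp : IsCompact C)
    (hself : C = Tm1 '' C ∪ T0 '' C ∪ T1 '' C) :
    IsClosed (Kplus C) :=
  stmt_5_general C hcomp hself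
end
end

section
/- K₊ is symmetric under the reflection x ↦ −x: for every x ∈ ℝ, x ∈ K₊ if and only if −x ∈ K₊. -/
/-!
The IFS `{T₋₁, T₀, T₁}` is symmetric under `x ↦ -x`: negation conjugates `T₁` and `T₋₁` and
commutes with `T₀`. Hence `-C` solves the same self-similarity equation as `C`. The Hutchinson
operator `s ↦ T₋₁ s ∪ T₀ s ∪ T₁ s` contracts the Hausdorff distance by the factor `1/100`, so its
compact nonempty fixed point is unique and `-C = C`. Negation also commutes with every `T₀^[i]`,
so it maps `K₊` onto itself.
-/

noncomputable section

open Metric Set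
open scoped NNReal ENNReal

section HausdorffContraction

variable {α β : Type*} [EMetricSpace α] [EMetricSpace β]

-- `hK` cannot be dropped: for `K = 0` and `t = ∅` the right-hand side is `0 * ∞ = 0`.
theorem LipschitzWith.infEDist_image_le {f : α → β} {K : ℝ≥0} (hf : LipschitzWith K f)
    (hK : K ≠ 0) (x : α) (t : Set α) : infEDist (f x) (f '' t) ≤ K * infEDist x t := by
  rw [infEDist, iInf_image, infEDist, ENNReal.mul_iInf_of_ne (by simpa) ENNReal.coe_ne_top]
  refine iInf_mono fun y => ?_
  rw [ENNReal.mul_iInf_of_ne (by simpa) ENNReal.coe_ne_top]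
  exact iInf_mono fun _ => hf x y

theorem LipschitzWith.hausdorffEDist_image_le {f : α → β} {K : ℝ≥0} (hf : LipschitzWith K f)
    (hK : K ≠ 0) (s t : Set α) :
    hausdorffEDist (f '' s) (f '' t) ≤ K * hausdorffEDist s t := by
  refine hausdorffEDist_le_of_infEDist ?_ ?_ <;> rintro _ ⟨x, hx, rfl⟩
  · exact (hf.infEDist_image_le hK x t).trans <| by
      gcongr; exact infEDist_le_hausdorffEDist_of_mem hx
  · exact (hf.infEDist_image_le hK x s).trans <| by
      gcongr; rw [hausdorffEDist_comm]; exact infEDist_le_hausdorffEDist_of_mem hx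

theorem IsClosed.eq_of_hausdorffEDist_le_mul {s t : Set α} {K : ℝ≥0} (hs : IsClosed s)
    (ht : IsClosed t) (hK : K < 1) (hfin : hausdorffEDist s t ≠ ∞)
    (h : hausdorffEDist s t ≤ K * hausdorffEDist s t) : s = t := by
  refine (hs.hausdorffEDist_zero_iff ht).mp <| by_contra fun h0 => h.not_gt ?_
  simpa using ENNReal.mul_lt_mul_left h0 hfin (ENNReal.coe_lt_one_iff.mpr hK)

end HausdorffContraction

def hutchinsonOp (s : Set ℝ) : Set ℝ := Tm1 '' s ∪ T0 '' s ∪ T1 '' s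

theorem lipschitzWith_of_sub_eq_div {f : ℝ → ℝ} {c : ℝ≥0} (hf : ∀ x y, f x - f y = (x - y) / c) :
    LipschitzWith c⁻¹ f :=
  LipschitzWith.of_dist_le_mul fun x y => by
    rw [Real.dist_eq, Real.dist_eq, hf, abs_div, NNReal.abs_eq, NNReal.coe_inv, div_eq_inv_mul]

theorem hausdorffEDist_hutchinsonOp_le (s t : Set ℝ) :
    hausdorffEDist (hutchinsonOp s) (hutchinsonOp t) ≤ (100⁻¹ : ℝ≥0) * hausdorffEDist s t := by
  have hK : (100⁻¹ : ℝ≥0) ≠ 0 := by norm_num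
  have image_le {f : ℝ → ℝ} (hf : ∀ x y, f x - f y = (x - y) / (100 : ℝ≥0)) :=
    (lipschitzWith_of_sub_eq_div hf).hausdorffEDist_image_le hK s t
  refine hausdorffEDist_union_le.trans <| max_le (hausdorffEDist_union_le.trans <| max_le ?_ ?_) ?_
  · exact image_le fun x y => by simp only [Tm1]; push_cast; ring
  · exact image_le fun x y => by simp only [T0]; push_cast; ring
  · exact image_le fun x y => by simp only [T1]; push_cast; ring

theorem semiconj_neg_T0 : Function.Semiconj Neg.neg T0 T0 := fun x => by simp [T0, neg_div]

theorem semiconj_neg_T1 : Function.Semiconj Neg.neg T1 Tm1 := fun x => by simp only [T1, Tm1]; ring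

theorem semiconj_neg_Tm1 : Function.Semiconj Neg.neg Tm1 T1 := fun x => by simp only [T1, Tm1]; ring

theorem commute_neg_T0z (i : ℤ) : Function.Commute Neg.neg (T0z i) := by
  have hinv : Function.Commute Neg.neg T0inv := fun x => by simp [T0inv]
  cases i with
  | ofNat n => exact semiconj_neg_T0.iterate_right n
  | negSucc n => exact hinv.iterate_right (n + 1)

theorem image_neg_hutchinsonOp (s : Set ℝ) :
    Neg.neg '' hutchinsonOp s = hutchinsonOp (Neg.neg '' s) := by
  rw [hutchinsonOp, hutchinsonOp, image_union, image_union, semiconj_neg_Tm1.set_image,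
    semiconj_neg_T0.set_image, semiconj_neg_T1.set_image]
  ac_rfl

theorem image_neg_eq_of_hutchinsonOp_eq {C : Set ℝ} (hne : C.Nonempty) (hcomp : IsCompact C)
    (hself : hutchinsonOp C = C) : Neg.neg '' C = C := by
  have hcomp_neg := hcomp.image continuous_neg
  refine hcomp_neg.isClosed.eq_of_hausdorffEDist_le_mul hcomp.isClosed (K := 100⁻¹) (by norm_num)
    (hausdorffEDist_ne_top_of_nonempty_of_bounded (hne.image _) hne hcomp_neg.isBounded
      hcomp.isBounded) ?_
  calc hausdorffEDist (Neg.neg '' C) C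
      = hausdorffEDist (hutchinsonOp (Neg.neg '' C)) (hutchinsonOp C) := by
        rw [← image_neg_hutchinsonOp, hself]
    _ ≤ _ := hausdorffEDist_hutchinsonOp_le _ _

theorem image_neg_Kplus {C : Set ℝ} (hC : Neg.neg '' C = C) : Neg.neg '' Kplus C = Kplus C := by
  have hgen : Neg.neg '' (T1 '' C ∪ Tm1 '' C) = T1 '' C ∪ Tm1 '' C := by
    rw [image_union, semiconj_neg_T1.set_image, semiconj_neg_Tm1.set_image, hC, union_comm]
  have hT0z (i : ℤ) := (commute_neg_T0z i).set_image (T1 '' C ∪ Tm1 '' C)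
  rw [Kplus, image_union, image_singleton, neg_zero, image_iUnion]
  simp only [hT0z, hgen]

theorem stmt_7 (C : Set ℝ) (hne : C.Nonempty) (hcomp : IsCompact C)
    (hself : C = Tm1 '' C ∪ T0 '' C ∪ T1 '' C) :
    ∀ x : ℝ, x ∈ Kplus C ↔ -x ∈ Kplus C := by
  have hK := image_neg_Kplus (image_neg_eq_of_hutchinsonOp_eq hne hcomp hself.symm)
  intro x
  calc x ∈ Kplus C ↔ -x ∈ Neg.neg '' Kplus C := neg_injective.mem_set_image.symm
    _ ↔ -x ∈ Kplus C := by rw [hK]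
end
end

section
/- Let g : ℝ → ℝ be any map with g(x) = T₁(x) for all x ∈ [−1, 1], and define g̃ : ℝ → ℝ by g̃(x) = −g(−x). Then every forward orbit accumulates on all of K₊: for every x ∈ ℝ, the set K₊ is contained in the topological closure of the orbit {f(x) : f ∈ G}, where G is the submonoid of self-maps of ℝ (under composition) generated by {T₀, T₀⁻¹, g, g̃} and T₀⁻¹(x) = 100x. -/
noncomputable section

/-!
Let `O` be the orbit of `x`. Since `T₀ⁿ x → 0`, the point `0` lies in `closure O`, hence `O` meets
`I = [-1, 1]`. On `I` the generators `T₀`, `g`, `g̃` agree with the contractions `T₀`, `T₁`, `T₋₁`,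
which map `I` into itself, so `E = closure (O ∩ I)` is a nonempty closed set invariant under all
three. The attractor `C` lies in every such set: at a point `c₀ ∈ C` maximising the distance to
`E`, writing `c₀ = Tⱼ c` shows that this distance is at most `1/100` of itself. Thus
`T₁ '' C ∪ T₋₁ '' C ⊆ E ⊆ closure O`, and `closure O` is invariant under the continuous maps
`T₀^[i]`, `i ∈ ℤ`, which lie in the monoid.
-/

open Set Metric Filter Topology
open scoped NNReal

lemma Metric.infDist_image_le_mul {α β : Type*} [PseudoMetricSpace α] [PseudoMetricSpace β]
    {f : α → β} {K : ℝ≥0} {s : Set α} {t : Set β} (hf : LipschitzWith K f) (hst : MapsTo f s t)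
    (hs : s.Nonempty) (x : α) : infDist (f x) t ≤ K * infDist x s := by
  have := hs.to_subtype
  rw [infDist_eq_iInf (x := x), Real.mul_iInf_of_nonneg K.coe_nonneg]
  exact le_ciInf fun y => (infDist_le_dist_of_mem (hst y.2)).trans (hf.dist_le_mul x y)

theorem IsCompact.subset_of_mapsTo_of_lipschitzWith {α : Type*} [PseudoMetricSpace α]
    {C E : Set α} {F : Set (α → α)} {K : ℝ≥0} (hC : IsCompact C) (hCF : C ⊆ ⋃ T ∈ F, T '' C)
    (hK : K < 1) (hFK : ∀ T ∈ F, LipschitzWith K T) (hE : IsClosed E) (hEne : E.Nonempty)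
    (hFE : ∀ T ∈ F, MapsTo T E E) : C ⊆ E := by
  rcases C.eq_empty_or_nonempty with rfl | hCne
  · exact empty_subset E
  obtain ⟨c₀, hc₀, hmax⟩ := hC.exists_isMaxOn hCne (continuous_infDist_pt E).continuousOn
  have hcontract : ∀ c ∈ C, infDist c E ≤ K * infDist c₀ E := by
    intro c hc
    obtain ⟨T, hT, c', hc', rfl⟩ : ∃ T ∈ F, ∃ c' ∈ C, T c' = c := by simpa using hCF hc
    exact (infDist_image_le_mul (hFK T hT) (hFE T hT) hEne c').trans
      (mul_le_mul_of_nonneg_left (hmax hc') K.coe_nonneg)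
  have hK' : (K : ℝ) < 1 := by exact_mod_cast hK
  have hc₀E : infDist c₀ E = 0 := by
    nlinarith [hcontract c₀ hc₀, infDist_nonneg (x := c₀) (s := E), K.coe_nonneg]
  intro c hc
  rw [hE.mem_iff_infDist_zero hEne]
  exact le_antisymm (by simpa [hc₀E] using hcontract c hc) infDist_nonneg

section Orbit

variable {α : Type*} (M : Submonoid (Function.End α)) (x : α)

def orbitOf : Set α := {y | ∃ f ∈ M, f x = y}

variable {M x}

lemma mapsTo_orbitOf {f : Function.End α} (hf : f ∈ M) : MapsTo f (orbitOf M x) (orbitOf M x) := by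
  rintro _ ⟨φ, hφ, rfl⟩
  exact ⟨f * φ, mul_mem hf hφ, rfl⟩

lemma mapsTo_closure_orbitOf_inter [TopologicalSpace α] {I : Set α} {h : α → α}
    {φ : Function.End α} (hφ : φ ∈ M) (hφh : EqOn φ h I) (hh : Continuous h)
    (hI : MapsTo h I I) :
    MapsTo h (closure (orbitOf M x ∩ I)) (closure (orbitOf M x ∩ I)) := by
  refine MapsTo.closure (fun y hy => ⟨?_, hI hy.2⟩) hh
  rw [← hφh hy.2]
  exact mapsTo_orbitOf hφ hy.1

end Orbit

lemma T0_iterate (n : ℕ) (x : ℝ) : T0^[n] x = (1 / 100) ^ n * x := by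
  induction n generalizing x with
  | zero => simp
  | succ n ih => rw [Function.iterate_succ_apply, ih]; simp only [T0]; ring

lemma continuous_T0z (i : ℤ) : Continuous (T0z i) := by
  cases i with
  | ofNat n => exact (continuous_id.div_const (100 : ℝ)).iterate n
  | negSucc n => exact (continuous_const_mul (100 : ℝ)).iterate (n + 1)

lemma T0z_mem {M : Submonoid (Function.End ℝ)} (hT0 : (T0 : Function.End ℝ) ∈ M)
    (hT0inv : (T0inv : Function.End ℝ) ∈ M) (i : ℤ) : (T0z i : Function.End ℝ) ∈ M := by
  cases i with
  | ofNat n => exact pow_mem (M := Function.End ℝ) hT0 n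
  | negSucc n => exact pow_mem (M := Function.End ℝ) hT0inv (n + 1)

lemma zero_mem_closure_orbitOf {M : Submonoid (Function.End ℝ)} (hT0 : (T0 : Function.End ℝ) ∈ M)
    (x : ℝ) : (0 : ℝ) ∈ closure (orbitOf M x) := by
  have hlim : Tendsto (fun n : ℕ => T0^[n] x) atTop (𝓝 0) := by
    simp_rw [T0_iterate]
    simpa using (tendsto_pow_atTop_nhds_zero_of_lt_one (by norm_num : (0 : ℝ) ≤ 1 / 100)
      (by norm_num)).mul_const x
  exact mem_closure_of_tendsto hlim
    (Eventually.of_forall fun n => ⟨_, pow_mem (M := Function.End ℝ) hT0 n, rfl⟩)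

lemma nonempty_closure_orbitOf_inter_Icc {M : Submonoid (Function.End ℝ)}
    (hT0 : (T0 : Function.End ℝ) ∈ M) (x : ℝ) :
    (closure (orbitOf M x ∩ Icc (-1) 1)).Nonempty := by
  obtain ⟨y, hyI, hyO⟩ := mem_closure_iff_nhds.1 (zero_mem_closure_orbitOf hT0 x) (Icc (-1) 1)
    (Icc_mem_nhds (by norm_num) (by norm_num))
  exact ⟨y, subset_closure ⟨hyO, hyI⟩⟩

def ifsMaps : Set (ℝ → ℝ) := {Tm1, T0, T1}

lemma subset_biUnion_ifsMaps {C : Set ℝ} (hself : C = Tm1 '' C ∪ T0 '' C ∪ T1 '' C) :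
    C ⊆ ⋃ T ∈ ifsMaps, T '' C := by
  rw [ifsMaps, biUnion_insert, biUnion_insert, biUnion_singleton, ← union_assoc, ← hself]

lemma lipschitzWith_of_sub_eq {f : ℝ → ℝ} (hf : ∀ a b, f a - f b = (a - b) / 100) :
    LipschitzWith (1 / 100) f :=
  LipschitzWith.of_dist_le_mul fun a b => by
    rw [Real.dist_eq, Real.dist_eq, hf, abs_div, abs_of_pos (by norm_num : (0 : ℝ) < 100)]
    exact le_of_eq (by push_cast; ring)

lemma lipschitzWith_of_mem_ifsMaps {T : ℝ → ℝ} (hT : T ∈ ifsMaps) : LipschitzWith (1 / 100) T := by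
  rcases hT with rfl | rfl | rfl <;>
    exact lipschitzWith_of_sub_eq fun a b => by simp only [Tm1, T0, T1]; ring

lemma mapsTo_Icc_of_mem_ifsMaps {T : ℝ → ℝ} (hT : T ∈ ifsMaps) :
    MapsTo T (Icc (-1) 1) (Icc (-1) 1) := by
  rcases hT with rfl | rfl | rfl <;> exact fun y ⟨h1, h2⟩ => by
    constructor <;> simp only [Tm1, T0, T1] <;> linarith

lemma exists_mem_eqOn_Icc_of_mem_ifsMaps {M : Submonoid (Function.End ℝ)} {g : ℝ → ℝ}
    (hg_T1 : ∀ x ∈ Icc (-1 : ℝ) 1, g x = T1 x) (hT0 : (T0 : Function.End ℝ) ∈ M)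
    (hg : (g : Function.End ℝ) ∈ M) (hg' : ((fun x => -g (-x)) : Function.End ℝ) ∈ M)
    {T : ℝ → ℝ} (hT : T ∈ ifsMaps) : ∃ φ ∈ M, EqOn φ T (Icc (-1) 1) := by
  rcases hT with rfl | rfl | rfl
  · refine ⟨_, hg', fun y hy => ?_⟩
    rw [hg_T1 (-y) ⟨by linarith [hy.2], by linarith [hy.1]⟩]
    simp only [T1, Tm1]
    ring
  · exact ⟨_, hT0, eqOn_refl _ _⟩
  · exact ⟨_, hg, fun y hy => hg_T1 y hy⟩

theorem stmt_16_general (C : Set ℝ) (hcomp : IsCompact C)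
    (hself : C = Tm1 '' C ∪ T0 '' C ∪ T1 '' C)
    (g : ℝ → ℝ)
    (hg_T1 : ∀ x ∈ Set.Icc (-1 : ℝ) 1, g x = T1 x) :
    ∀ x : ℝ, Kplus C ⊆ closure {y : ℝ |
      ∃ f ∈ Submonoid.closure ({T0, T0inv, g, fun x => -g (-x)} : Set (Function.End ℝ)),
        f x = y} := by
  intro x
  set M := Submonoid.closure ({T0, T0inv, g, fun x => -g (-x)} : Set (Function.End ℝ))
  change Kplus C ⊆ closure (orbitOf M x)
  have hT0 : (T0 : Function.End ℝ) ∈ M := Submonoid.subset_closure (mem_insert _ _)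
  have hT0inv : (T0inv : Function.End ℝ) ∈ M :=
    Submonoid.subset_closure (mem_insert_of_mem _ (mem_insert _ _))
  have hg : (g : Function.End ℝ) ∈ M :=
    Submonoid.subset_closure (mem_insert_of_mem _ (mem_insert_of_mem _ (mem_insert _ _)))
  have hg' : ((fun x => -g (-x)) : Function.End ℝ) ∈ M :=
    Submonoid.subset_closure (mem_insert_of_mem _ (mem_insert_of_mem _ (mem_insert_of_mem _ rfl)))
  set E := closure (orbitOf M x ∩ Icc (-1) 1)
  have hinv : ∀ T ∈ ifsMaps, MapsTo T E E := fun T hT => by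
    obtain ⟨φ, hφM, hφT⟩ := exists_mem_eqOn_Icc_of_mem_ifsMaps hg_T1 hT0 hg hg' hT
    exact mapsTo_closure_orbitOf_inter hφM hφT (lipschitzWith_of_mem_ifsMaps hT).continuous
      (mapsTo_Icc_of_mem_ifsMaps hT)
  have hCE : C ⊆ E := hcomp.subset_of_mapsTo_of_lipschitzWith (subset_biUnion_ifsMaps hself)
    (by norm_num) (fun _ => lipschitzWith_of_mem_ifsMaps) isClosed_closure
    (nonempty_closure_orbitOf_inter_Icc hT0 x) hinv
  have hCO : T1 '' C ∪ Tm1 '' C ⊆ closure (orbitOf M x) := by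
    refine union_subset ?_ ?_ <;>
      exact ((hinv _ (by simp [ifsMaps])).mono_left hCE).image_subset.trans
        (closure_mono inter_subset_left)
  rintro y (hy | hy)
  · exact mem_singleton_iff.1 hy ▸ zero_mem_closure_orbitOf hT0 x
  · obtain ⟨i, hi⟩ := mem_iUnion.1 hy
    exact (((mapsTo_orbitOf (T0z_mem hT0 hT0inv i)).closure (continuous_T0z i)).mono_left
      hCO).image_subset hi

theorem stmt_16 (C : Set ℝ) (hne : C.Nonempty) (hcomp : IsCompact C)
    (hself : C = Tm1 '' C ∪ T0 '' C ∪ T1 '' C)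
    (g : ℝ → ℝ)
    (hg_T1 : ∀ x ∈ Set.Icc (-1 : ℝ) 1, g x = T1 x) :
    ∀ x : ℝ, Kplus C ⊆ closure {y : ℝ |
      ∃ f ∈ Submonoid.closure ({T0, T0inv, g, fun x => -g (-x)} : Set (Function.End ℝ)),
        f x = y} :=
  stmt_16_general C hcomp hself g hg_T1
end
end

section
/- Let g : ℝ → ℝ be a strictly increasing bijection such that g(x) = x whenever x < −10 or x > 1, g(x) = h(T₋₁⁻¹(h⁻¹(x))) for all x ∈ [−10, −9.8] (where T₋₁⁻¹(x) = 100x + 99 and h⁻¹(y) = 10y for y ≥ 0, h⁻¹(y) = y/10 for y < 0), and g(x) = T₁(x) for all x ∈ [−1, 1]; define g̃ : ℝ → ℝ by g̃(x) = −g(−x). Then every backward orbit accumulates on all of K₋: for every x ∈ ℝ, the set K₋ is contained in the topological closure of the set {y ∈ ℝ : f(y) = x for some f ∈ G}, where G is the submonoid of self-maps of ℝ (under composition) generated by {T₀, T₀⁻¹, g, g̃} and T₀⁻¹(x) = 100x. -/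
noncomputable section

/-- The map `Q : x ↦ x/10`. -/
def Q (x : ℝ) : ℝ := x / 10

/-- The set `K₋ = Q '' K₊`. -/
def Kminus (C : Set ℝ) : Set ℝ := Q '' Kplus C

/-- The bijection `h` : `x ↦ x/10` for `x ≥ 0`, `x ↦ 10 x` for `x < 0`. -/
def hmap (x : ℝ) : ℝ := if 0 ≤ x then x / 10 else 10 * x

/-- The inverse of `h` : `y ↦ 10 y` for `y ≥ 0`, `y ↦ y/10` for `y < 0`. -/
def hmapInv (y : ℝ) : ℝ := if 0 ≤ y then 10 * y else y / 10

/-- The inverse of `T₋₁` : `x ↦ 100 x + 99`. -/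
def Tm1inv (x : ℝ) : ℝ := 100 * x + 99

/-!
Let `D` be the closure of the backward orbit of `x`. Every generator is an increasing
homeomorphism of `ℝ`, so `D` is closed under preimages by the generators: under `s ↦ 100 ^ k s`,
and, for `|s| ≤ 1/10`, under `s ↦ s / 100 ± 99/1000`, because there `g (s - 9.9)` and
`-g (-s - 9.9)` are `s` or `100 s`. Conjugated by `Q`, these two maps and `s ↦ s / 100` are
`T₁`, `T₋₁`, `T₀`, so `Q ⁻¹' D ∩ [-1, 1]` is a closed nonempty set invariant under the three
`1/100`-contractions of which `C` is the attractor, and it therefore contains `C`. Rescaling by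
`100 ^ k` then gives `K₋ ⊆ D`.
-/

open Set Metric Filter Function
open scoped NNReal

lemma infDist_le_mul_infDist_of_mapsTo {X : Type*} [PseudoMetricSpace X] {f : X → X} {K : ℝ≥0}
    {E : Set X} (hf : LipschitzWith K f) (hfE : MapsTo f E E) (hE : E.Nonempty) (x : X) :
    infDist (f x) E ≤ K * infDist x E := by
  have : Nonempty E := hE.to_subtype
  rw [infDist_eq_iInf (x := x), Real.mul_iInf_of_nonneg K.coe_nonneg]
  exact le_ciInf fun y => (infDist_le_dist_of_mem (hfE y.2)).trans (hf.dist_le_mul x y)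

theorem IsCompact.subset_of_mapsTo_of_lipschitzWith_s17 {X ι : Type*} [PseudoMetricSpace X]
    {A E : Set X} {ψ : ι → X → X} {K : ℝ≥0} (hA : IsCompact A) (hAψ : A ⊆ ⋃ i, ψ i '' A)
    (hψ : ∀ i, LipschitzWith K (ψ i)) (hK : K < 1) (hE : IsClosed E) (hEne : E.Nonempty)
    (hEψ : ∀ i, MapsTo (ψ i) E E) : A ⊆ E := by
  rcases A.eq_empty_or_nonempty with rfl | hAne
  · exact empty_subset E
  obtain ⟨a₀, ha₀, hmax⟩ := hA.exists_isMaxOn hAne (continuous_infDist_pt E).continuousOn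
  -- the maximum of `infDist · E` on `A` is at most `K` times itself
  have hmax_nonpos : infDist a₀ E ≤ 0 := by
    obtain ⟨i, a, ha, rfl⟩ : ∃ i, ∃ a ∈ A, ψ i a = a₀ := by simpa using hAψ ha₀
    have hcontract := (infDist_le_mul_infDist_of_mapsTo (hψ i) (hEψ i) hEne a).trans
      (mul_le_mul_of_nonneg_left (hmax ha) K.coe_nonneg)
    have hK' : (K : ℝ) < 1 := hK
    nlinarith [infDist_nonneg (x := ψ i a) (s := E)]
  intro a ha
  rw [← hE.closure_eq, mem_closure_iff_infDist_zero hEne]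
  exact le_antisymm ((hmax ha).trans hmax_nonpos) infDist_nonneg

lemma StrictMono.preimage_closure_subset {α : Type*} [LinearOrder α] [TopologicalSpace α]
    [OrderTopology α] {f : α → α} (hf : StrictMono f) (hsurj : Surjective f) {S : Set α}
    (hS : f ⁻¹' S ⊆ S) : f ⁻¹' closure S ⊆ closure S :=
  ((hf.orderIsoOfSurjective f hsurj).toHomeomorph.preimage_closure S).trans_subset
    (closure_mono hS)

lemma mem_closure_of_apply_mem_closure {α : Type*} [LinearOrder α] [TopologicalSpace α]
    [OrderTopology α] {S : Set (Function.End α)} {x : α} {f : Function.End α} (hf : f ∈ S)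
    (hmono : StrictMono f) (hsurj : Surjective f) (y : α)
    (hy : f y ∈ closure {y | ∃ φ ∈ Submonoid.closure S, φ y = x}) :
    y ∈ closure {y | ∃ φ ∈ Submonoid.closure S, φ y = x} :=
  hmono.preimage_closure_subset hsurj (by
    rintro _ ⟨φ, hφ, hφy⟩
    exact ⟨φ * f, mul_mem hφ (Submonoid.subset_closure hf), hφy⟩) hy

lemma div_zpow_mem {D : Set ℝ} (hmul : ∀ d ∈ D, 100 * d ∈ D) (hdiv : ∀ d ∈ D, d / 100 ∈ D)
    (k : ℤ) {d : ℝ} (hd : d ∈ D) : d / 100 ^ k ∈ D := by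
  induction k using Int.induction_on with
  | zero => simpa using hd
  | succ k ih => simpa [zpow_add_one₀, div_mul_eq_div_div] using hdiv _ ih
  | pred k ih =>
    convert hmul _ ih using 1
    rw [zpow_sub_one₀ (by norm_num)]
    field_simp

lemma lipschitzWith_of_eq_div_add {f : ℝ → ℝ} (b : ℝ) (hf : ∀ x, f x = x / 100 + b) :
    LipschitzWith (1 / 100) f :=
  LipschitzWith.of_dist_le_mul fun x y => by
    rw [Real.dist_eq, Real.dist_eq, hf, hf, add_sub_add_right_eq_sub, ← sub_div, abs_div]
    norm_num [div_eq_inv_mul]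

lemma T0z_apply (i : ℤ) (x : ℝ) : T0z i x = x / 100 ^ i := by
  cases i with
  | ofNat n =>
    induction n generalizing x with
    | zero => simp [T0z]
    | succ n ih =>
      simp only [T0z, Function.iterate_succ_apply, Int.ofNat_eq_natCast, zpow_natCast] at ih ⊢
      rw [ih, T0, pow_succ']
      ring
  | negSucc n =>
    suffices ∀ m : ℕ, T0inv^[m] x = 100 ^ m * x by
      rw [T0z, this, zpow_negSucc, div_inv_eq_mul, mul_comm]
    intro m
    induction m with
    | zero => simp
    | succ m ih =>
      rw [Function.iterate_succ_apply', ih, T0inv, pow_succ']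
      ring

lemma strictMono_T0 : StrictMono T0 := fun a b h => by unfold T0; linarith

lemma surjective_T0 : Surjective T0 := fun y => ⟨100 * y, by unfold T0; ring⟩

lemma strictMono_T0inv : StrictMono T0inv := fun a b h => by unfold T0inv; linarith

lemma surjective_T0inv : Surjective T0inv := fun y => ⟨y / 100, by unfold T0inv; ring⟩

lemma Q_Tm1 (c : ℝ) : Q (Tm1 c) = Q c / 100 - 99 / 1000 := by unfold Q Tm1; ring

lemma Q_T0 (c : ℝ) : Q (T0 c) = Q c / 100 := by unfold Q T0; ring

lemma Q_T1 (c : ℝ) : Q (T1 c) = Q c / 100 + 99 / 1000 := by unfold Q T1; ring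

lemma subset_preimage_Q_inter_Icc {C D : Set ℝ} (hC : IsCompact C)
    (hself : C = Tm1 '' C ∪ T0 '' C ∪ T1 '' C) (hD : IsClosed D) (h0 : (0 : ℝ) ∈ D)
    (hdiv : ∀ d ∈ D, d / 100 ∈ D)
    (hminus : ∀ s ∈ D, |s| ≤ 1 / 10 → s / 100 - 99 / 1000 ∈ D)
    (hplus : ∀ s ∈ D, |s| ≤ 1 / 10 → s / 100 + 99 / 1000 ∈ D) :
    C ⊆ Q ⁻¹' D ∩ Icc (-1) 1 := by
  refine hC.subset_of_mapsTo_of_lipschitzWith_s17 (ψ := ![Tm1, T0, T1]) (K := 1 / 100) ?_ ?_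
    (by norm_num) ((hD.preimage (by unfold Q; fun_prop)).inter isClosed_Icc)
    ⟨0, by simpa [Q] using h0, by norm_num⟩ ?_
  · intro c hc
    rw [hself] at hc
    rcases hc with (⟨c, hc, rfl⟩ | ⟨c, hc, rfl⟩) | ⟨c, hc, rfl⟩
    exacts [mem_iUnion_of_mem 0 ⟨c, hc, rfl⟩, mem_iUnion_of_mem 1 ⟨c, hc, rfl⟩,
      mem_iUnion_of_mem 2 ⟨c, hc, rfl⟩]
  · intro i
    fin_cases i
    · exact lipschitzWith_of_eq_div_add (-99 / 100) fun x => by simp [Tm1]; ring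
    · exact lipschitzWith_of_eq_div_add 0 fun x => by simp [T0]
    · exact lipschitzWith_of_eq_div_add (99 / 100) fun x => by simp [T1]; ring
  · rintro i c ⟨hcD, hc₁, hc₂⟩
    have hQc : |Q c| ≤ 1 / 10 := by
      rw [abs_le]; unfold Q; constructor <;> linarith
    fin_cases i
    · refine ⟨by simpa [Q_Tm1] using hminus _ hcD hQc, ?_⟩
      show Tm1 c ∈ Icc (-1) 1
      simp only [Tm1, mem_Icc]; constructor <;> linarith
    · refine ⟨by simpa [Q_T0] using hdiv _ hcD, ?_⟩
      show T0 c ∈ Icc (-1) 1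
      simp only [T0, mem_Icc]; constructor <;> linarith
    · refine ⟨by simpa [Q_T1] using hplus _ hcD hQc, ?_⟩
      show T1 c ∈ Icc (-1) 1
      simp only [T1, mem_Icc]; constructor <;> linarith

lemma Kminus_subset_of_isClosed {C D : Set ℝ} (hC : IsCompact C)
    (hself : C = Tm1 '' C ∪ T0 '' C ∪ T1 '' C) (hD : IsClosed D) (hDne : D.Nonempty)
    (hscale : ∀ k : ℤ, ∀ d ∈ D, d / 100 ^ k ∈ D)
    (hminus : ∀ s ∈ D, |s| ≤ 1 / 10 → s / 100 - 99 / 1000 ∈ D)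
    (hplus : ∀ s ∈ D, |s| ≤ 1 / 10 → s / 100 + 99 / 1000 ∈ D) :
    Kminus C ⊆ D := by
  have h0 : (0 : ℝ) ∈ D := by
    obtain ⟨x, hx⟩ := hDne
    refine hD.mem_of_tendsto ((tendsto_const_nhds (x := x)).div_atTop
      (tendsto_pow_atTop_atTop_of_one_lt (by norm_num : (1 : ℝ) < 100)))
      (Eventually.of_forall fun n => ?_)
    simpa using hscale n x hx
  have hCD := subset_preimage_Q_inter_Icc hC hself hD h0 (by simpa using hscale 1) hminus hplus
  have hQC : ∀ c ∈ C, Q c ∈ D ∧ |Q c| ≤ 1 / 10 := fun c hc => by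
    obtain ⟨hcD, hc₁, hc₂⟩ := hCD hc
    refine ⟨hcD, abs_le.2 ⟨?_, ?_⟩⟩ <;> unfold Q <;> linarith
  rintro _ ⟨k, rfl | ⟨_, ⟨i, rfl⟩, w, hw, rfl⟩, rfl⟩
  · simpa [Q] using h0
  rw [Q, T0z_apply, div_right_comm, ← Q]
  refine hscale i _ ?_
  rcases hw with ⟨c, hc, rfl⟩ | ⟨c, hc, rfl⟩
  · rw [Q_T1]; exact hplus _ (hQC c hc).1 (hQC c hc).2
  · rw [Q_Tm1]; exact hminus _ (hQC c hc).1 (hQC c hc).2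

lemma hmap_ten_mul (s : ℝ) : hmap (10 * s) = if 0 ≤ s then s else 100 * s := by
  by_cases hs : 0 ≤ s
  · rw [hmap, if_pos (by positivity), if_pos hs]; ring
  · rw [hmap, if_neg (by linarith), if_neg hs]; ring

lemma apply_sub_of_abs_le {g : ℝ → ℝ}
    (hg_left : ∀ x ∈ Set.Icc (-10 : ℝ) (-9.8 : ℝ), g x = hmap (Tm1inv (hmapInv x)))
    {s : ℝ} (hs : |s| ≤ 1 / 10) : g (s - 99 / 10) = hmap (10 * s) := by
  obtain ⟨hs₁, hs₂⟩ := abs_le.1 hs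
  rw [hg_left _ ⟨by linarith, by norm_num; linarith⟩, hmapInv, if_neg (by linarith), Tm1inv]
  ring_nf

lemma Kminus_subset_of_backward_invariant {C D : Set ℝ} {g : ℝ → ℝ} (hC : IsCompact C)
    (hself : C = Tm1 '' C ∪ T0 '' C ∪ T1 '' C)
    (hg_left : ∀ x ∈ Set.Icc (-10 : ℝ) (-9.8 : ℝ), g x = hmap (Tm1inv (hmapInv x)))
    (hD : IsClosed D) (hDne : D.Nonempty) (hT0 : ∀ y, T0 y ∈ D → y ∈ D)
    (hT0inv : ∀ y, T0inv y ∈ D → y ∈ D) (hg : ∀ y, g y ∈ D → y ∈ D)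
    (hg' : ∀ y, -g (-y) ∈ D → y ∈ D) : Kminus C ⊆ D := by
  have hmul : ∀ d ∈ D, 100 * d ∈ D := fun d hd =>
    hT0 _ (by rwa [T0, mul_div_cancel_left₀ _ (by norm_num)])
  have hdiv : ∀ d ∈ D, d / 100 ∈ D := fun d hd =>
    hT0inv _ (by rwa [T0inv, mul_div_cancel₀ _ (by norm_num)])
  refine Kminus_subset_of_isClosed hC hself hD hDne (fun k d hd => div_zpow_mem hmul hdiv k hd)
    (fun s hs habs => ?_) (fun s hs habs => ?_)
  · have : s - 99 / 10 ∈ D := hg _ <| by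
      rw [apply_sub_of_abs_le hg_left habs, hmap_ten_mul]
      split_ifs
      exacts [hs, hmul s hs]
    convert hdiv _ this using 1
    ring
  · have : s + 99 / 10 ∈ D := hg' _ <| by
      rw [neg_add', apply_sub_of_abs_le hg_left (by rwa [abs_neg]), hmap_ten_mul]
      split_ifs
      · simpa using hs
      · simpa using hmul s hs
    convert hdiv _ this using 1
    ring

theorem stmt_17_general (C : Set ℝ) (hcomp : IsCompact C)
    (hself : C = Tm1 '' C ∪ T0 '' C ∪ T1 '' C)
    (g : ℝ → ℝ) (hg_mono : StrictMono g) (hg_bij : Function.Bijective g)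
    (hg_left : ∀ x ∈ Set.Icc (-10 : ℝ) (-9.8 : ℝ), g x = hmap (Tm1inv (hmapInv x))) :
    ∀ x : ℝ, Kminus C ⊆ closure {y : ℝ |
      ∃ f ∈ Submonoid.closure ({T0, T0inv, g, fun x => -g (-x)} : Set (Function.End ℝ)),
        f y = x} := by
  intro x
  have hg'_surj : Surjective fun x => -g (-x) := fun y => by
    obtain ⟨w, hw⟩ := hg_bij.2 (-y)
    exact ⟨-w, by simp [hw]⟩
  exact Kminus_subset_of_backward_invariant hcomp hself hg_left isClosed_closure
    ⟨x, subset_closure ⟨1, one_mem _, rfl⟩⟩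
    (mem_closure_of_apply_mem_closure (.inl rfl) strictMono_T0 surjective_T0)
    (mem_closure_of_apply_mem_closure (.inr (.inl rfl)) strictMono_T0inv surjective_T0inv)
    (mem_closure_of_apply_mem_closure (.inr (.inr (.inl rfl))) hg_mono hg_bij.2)
    (mem_closure_of_apply_mem_closure (.inr (.inr (.inr rfl)))
      (fun a b h => neg_lt_neg (hg_mono (neg_lt_neg h))) hg'_surj)

theorem stmt_17 (C : Set ℝ) (hne : C.Nonempty) (hcomp : IsCompact C)
    (hself : C = Tm1 '' C ∪ T0 '' C ∪ T1 '' C)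
    (g : ℝ → ℝ) (hg_mono : StrictMono g) (hg_bij : Function.Bijective g)
    (hg_id : ∀ x : ℝ, x < -10 ∨ 1 < x → g x = x)
    (hg_left : ∀ x ∈ Set.Icc (-10 : ℝ) (-9.8 : ℝ), g x = hmap (Tm1inv (hmapInv x)))
    (hg_T1 : ∀ x ∈ Set.Icc (-1 : ℝ) 1, g x = T1 x) :
    ∀ x : ℝ, Kminus C ⊆ closure {y : ℝ |
      ∃ f ∈ Submonoid.closure ({T0, T0inv, g, fun x => -g (-x)} : Set (Function.End ℝ)),
        f y = x} :=
  stmt_17_general C hcomp hself g hg_mono hg_bij hg_left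
end
end
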